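/- For n ≥ 3 and g = 1: suppose F₁, F₂ are distinct 1-good-neighbor faulty sets of HCN_n each of size at most 2n+1, and suppose for every pair of adjacent vertices u, w outside F₁ ∪ F₂ and every v ∈ F₁ Δ F₂, vw is not an edge; for every w outside F₁ ∪ F₂, w does not have two neighbors in F₁ \ F₂; and w does not have two neighbors in F₂ \ F₁. Then the subgraph of HCN_n induced on V \ (F₁ ∪ F₂) has no isolated vertex. -/

import Mathlib

/-- Vertices of the hierarchical cubic network: pairs (cluster label, position). -/
abbrev HVert (n : ℕ) := (Fin n → Bool) × (Fin n → Bool)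

/-- The hierarchical cubic network HCN_n. Within a cluster (same first coordinate),
two vertices are adjacent iff their second coordinates differ in exactly one bit.
Crossing edges: (x,y) with x ≠ y is adjacent to (y,x); (x,x) is adjacent to (x̄,x̄). -/
def HCN (n : ℕ) : SimpleGraph (HVert n) :=
  SimpleGraph.fromRel (fun u v =>
    (u.1 = v.1 ∧ (Finset.univ.filter (fun i => u.2 i ≠ v.2 i)).card = 1) ∨
    (u.1 ≠ u.2 ∧ v = (u.2, u.1)) ∨
    (u.1 = u.2 ∧ v = (fun i => !u.1 i, fun i => !u.2 i)))

/-- `u` and `v` are joined by a crossing edge of HCN_n. -/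
def IsCrossing (n : ℕ) (u v : HVert n) : Prop :=
  ((u.1 ≠ u.2 ∧ v = (u.2, u.1)) ∨ (u.1 = u.2 ∧ v = (fun i => !u.1 i, fun i => !u.2 i))) ∨
  ((v.1 ≠ v.2 ∧ u = (v.2, v.1)) ∨ (v.1 = v.2 ∧ u = (fun i => !v.1 i, fun i => !v.2 i)))

/-- `F` is a g-good-neighbor faulty set of HCN_n: every vertex outside `F`
has at least `g` neighbors outside `F`. -/
def GoodNbrSet (n g : ℕ) (F : Set (HVert n)) : Prop :=
  ∀ v ∉ F, g ≤ (((HCN n).neighborSet v) \ F).ncard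

/-!
Suppose `w ∉ F₁ ∪ F₂` has all its neighbours in `F₁ ∪ F₂`. As `F₁` and `F₂` are 1-good, `w` has
neighbours `u ∈ F₁ \ F₂` and `v ∈ F₂ \ F₁`. By the first condition, a vertex outside `F₁ ∪ F₂`
adjacent to `F₁ ∆ F₂` is isolated too, so the component of `w` in `HCN_n - (F₁ ∩ F₂)` consists of
isolated vertices and vertices of `F₁ ∆ F₂`. It misses every vertex which, together with its
crossing neighbour, lies outside `F₁ ∪ F₂`; such vertices exist by counting. Since `F₁ ∩ F₂` is
again 1-good, `κ¹(HCN_n) ≥ 2n` gives `|F₁ ∩ F₂| ≥ 2n`, hence `F₁ \ F₂ = {u}` and `F₂ \ F₁ = {v}`.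
Now every isolated vertex is a common neighbour of `u` and `v`, so there are at most two of them,
and counting their neighbours and those of `u`, `v` in `F₁ ∩ F₂` (`HCN_n` is triangle-free and two
vertices have at most two common neighbours) gives `|F₁ ∩ F₂| ≥ 3n - 2 > 2n`.

For `κ¹(HCN_n) ≥ 2n`: removing fewer than `m` vertices leaves the hypercube `Q_m` connected, so
clusters with fewer than `n` faults stay connected; two such clusters are joined through a
fault-free third one; and a vertex of the only cluster with `n` or more faults escapes from it,
since otherwise the `2n` in-cluster neighbours of one of its edges, or their crossing neighbours,
would be `2n` distinct faults.
-/

theorem Set.exists_notMem_of_ncard_lt {α : Type*} [Finite α] {s : Set α}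
    (h : s.ncard < Nat.card α) : ∃ x, x ∉ s := by
  by_contra! hs
  rw [Set.eq_univ_of_forall hs, Set.ncard_univ] at h
  exact h.false

theorem Set.ncard_add_ncard_le_of_disjoint {α : Type*} [Finite α] {s t u : Set α}
    (h : Disjoint s t) (hs : s ⊆ u) (ht : t ⊆ u) : s.ncard + t.ncard ≤ u.ncard :=
  Set.ncard_union_eq h ▸ Set.ncard_le_ncard (Set.union_subset hs ht)

theorem Set.sdiff_eq_singleton_of_ncard_le {α : Type*} [Finite α] {s t : Set α} {a : α}
    (ha : a ∈ s \ t) (hs : s.ncard ≤ (s ∩ t).ncard + 1) : s \ t = {a} := by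
  have := Set.ncard_inter_add_ncard_sdiff_eq_ncard s t
  have hle : (s \ t).ncard ≤ 1 := by omega
  exact Set.eq_singleton_iff_unique_mem.2 ⟨ha, fun x hx => (Set.ncard_le_one_iff).1 hle hx ha⟩

theorem Function.Involutive.exists_notMem_and_notMem {α : Type*} [Finite α] {f : α → α}
    (hf : Function.Involutive f) {s : Set α} (hs : 2 * s.ncard < Nat.card α) :
    ∃ x, x ∉ s ∧ f x ∉ s := by
  obtain ⟨x, hx⟩ := Set.exists_notMem_of_ncard_lt (s := s ∪ f '' s) (by
    have := Set.ncard_union_le s (f '' s)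
    have := Set.ncard_image_le (f := f) s.toFinite
    omega)
  exact ⟨x, fun h => hx (Or.inl h), fun h => hx (Or.inr ⟨f x, h, hf x⟩)⟩

namespace SimpleGraph

variable {V : Type*}

/-- `G - S`, kept on the whole vertex type: the vertices of `S` become isolated. -/
def avoid (G : SimpleGraph V) (S : Set V) : SimpleGraph V where
  Adj a b := G.Adj a b ∧ a ∉ S ∧ b ∉ S
  symm := ⟨fun _ _ h => ⟨h.1.symm, h.2.2, h.2.1⟩⟩
  loopless := ⟨fun _ h => h.1.ne rfl⟩

theorem avoid_adj {G : SimpleGraph V} {S : Set V} {a b : V} :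
    (G.avoid S).Adj a b ↔ G.Adj a b ∧ a ∉ S ∧ b ∉ S :=
  Iff.rfl

theorem Reachable.mem_of_forall_adj_mem {G : SimpleGraph V} {C : Set V}
    (hC : ∀ a b, G.Adj a b → a ∈ C → b ∈ C) {a b : V} (h : G.Reachable a b) (ha : a ∈ C) :
    b ∈ C := by
  obtain ⟨p⟩ := h
  induction p with
  | nil => exact ha
  | cons hadj _ ih => exact ih (hC _ _ hadj ha)

section Counting

variable {G : SimpleGraph V} {A : Set V}

theorem le_ncard_neighborSet_inter_add [Finite V] {d : ℕ} {x : V}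
    (hdeg : (G.neighborSet x).ncard = d) {B : Set V} (hB : G.neighborSet x ⊆ A ∪ B) :
    d ≤ (G.neighborSet x ∩ A).ncard + B.ncard := by
  rw [← hdeg]
  refine (Set.ncard_le_ncard fun t ht => ?_).trans (Set.ncard_union_le _ B)
  rcases hB ht with h | h
  · exact Or.inl ⟨ht, h⟩
  · exact Or.inr h

theorem disjoint_neighborSet_inter_of_adj (htri : G.CliqueFree 3) {x y : V} (hxy : G.Adj x y) :
    Disjoint (G.neighborSet x ∩ A) (G.neighborSet y ∩ A) := by
  classical
  rw [Set.disjoint_left]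
  rintro t ⟨hxt, -⟩ ⟨hyt, -⟩
  exact htri {x, y, t} (is3Clique_triple_iff.2 ⟨hxy, hxt, hyt⟩)

theorem ncard_neighborSet_inter_inter_add_ncard_le [Finite V]
    (hcommon : ∀ {x y : V}, x ≠ y → (G.neighborSet x ∩ G.neighborSet y).ncard ≤ 2)
    {x y : V} (hxy : x ≠ y) {C : Set V} (hC : C ⊆ G.neighborSet x ∩ G.neighborSet y)
    (hCA : Disjoint C A) :
    ((G.neighborSet x ∩ A) ∩ (G.neighborSet y ∩ A)).ncard + C.ncard ≤ 2 := by
  rw [← Set.ncard_union_eq (Set.disjoint_of_subset_left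
    (fun t ht => ht.1.2) hCA.symm)]
  refine (Set.ncard_le_ncard (Set.union_subset ?_ hC)).trans (hcommon hxy)
  exact fun t ht => ⟨ht.1.1, ht.2.1⟩

theorem three_mul_le_ncard_add_five [Finite V] {d : ℕ} (hd : 3 ≤ d)
    (hdeg : ∀ x, (G.neighborSet x).ncard = d) (htri : G.CliqueFree 3)
    (hcommon : ∀ {x y : V}, x ≠ y → (G.neighborSet x ∩ G.neighborSet y).ncard ≤ 2)
    {u v w : V} {W : Set V} (huv : u ≠ v) (hu : u ∉ A) (hv : v ∉ A) (hw : w ∈ W)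
    (hWA : Disjoint W A) (hWuv : ∀ y ∈ W, G.Adj u y ∧ G.Adj v y)
    (hNW : ∀ y ∈ W, G.neighborSet y ⊆ A ∪ {u, v})
    (hNu : G.neighborSet u ⊆ A ∪ W) (hNv : G.neighborSet v ⊆ A ∪ W) :
    3 * d ≤ A.ncard + 5 := by
  have hWuv' : W ⊆ G.neighborSet u ∩ G.neighborSet v := fun y hy => hWuv y hy
  have hW : W.ncard ≤ 2 := (Set.ncard_le_ncard hWuv').trans (hcommon huv)
  have hAy (y) (hy : y ∈ W) : d ≤ (G.neighborSet y ∩ A).ncard + 2 :=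
    Set.ncard_pair huv ▸ le_ncard_neighborSet_inter_add (hdeg y) (hNW y hy)
  have hAu := le_ncard_neighborSet_inter_add (hdeg u) hNu
  have hAv := le_ncard_neighborSet_inter_add (hdeg v) hNv
  have hAuAv := ncard_neighborSet_inter_inter_add_ncard_le hcommon huv hWuv' hWA
  have hunion := Set.ncard_union_add_ncard_inter (G.neighborSet u ∩ A) (G.neighborSet v ∩ A)
  have hdisj (y) (hy : y ∈ W) :
      Disjoint (G.neighborSet y ∩ A) (G.neighborSet u ∩ A ∪ G.neighborSet v ∩ A) :=
    Disjoint.union_right (disjoint_neighborSet_inter_of_adj htri (hWuv y hy).1.symm)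
      (disjoint_neighborSet_inter_of_adj htri (hWuv y hy).2.symm)
  have hsub (x) : G.neighborSet x ∩ A ⊆ A := Set.inter_subset_right
  by_cases hW₁ : W.ncard ≤ 1
  · have := Set.ncard_add_ncard_le_of_disjoint (hdisj w hw) (hsub w)
      (Set.union_subset (hsub u) (hsub v))
    have := hAy w hw
    have := (Set.ncard_pos (Set.toFinite W)).2 ⟨w, hw⟩
    omega
  · obtain ⟨z, hz, hzw⟩ := Set.exists_ne_of_one_lt_ncard (not_le.1 hW₁) w
    have hwz : Disjoint (G.neighborSet w ∩ A) (G.neighborSet z ∩ A) := by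
      have := ncard_neighborSet_inter_inter_add_ncard_le hcommon hzw.symm (A := A) (C := {u, v})
        (by simp [Set.insert_subset_iff, (hWuv w hw).1.symm, (hWuv w hw).2.symm,
          (hWuv z hz).1.symm, (hWuv z hz).2.symm])
        (by simp [Set.disjoint_insert_left, hu, hv])
      rw [Set.ncard_pair huv] at this
      exact Set.disjoint_iff_inter_eq_empty.2 ((Set.ncard_eq_zero (Set.toFinite _)).1 (by omega))
    have := Set.ncard_add_ncard_le_of_disjoint ((hdisj w hw).union_left (hdisj z hz))
      (Set.union_subset (hsub w) (hsub z)) (Set.union_subset (hsub u) (hsub v))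
    rw [Set.ncard_union_eq hwz] at this
    have := hAy w hw
    have := hAy z hz
    omega

end Counting

def hypercube (m : ℕ) : SimpleGraph (Fin m → Bool) where
  Adj y z := hammingDist y z = 1
  symm := ⟨fun y z h => by rwa [hammingDist_comm]⟩
  loopless := ⟨fun y h => by simp at h⟩

variable {m : ℕ}

theorem hammingDist_cons (a b : Bool) (y z : Fin m → Bool) :
    hammingDist (Fin.cons a y : Fin (m + 1) → Bool) (Fin.cons b z) =
      (if a = b then 0 else 1) + hammingDist y z := by
  unfold hammingDist
  rw [Fin.card_filter_univ_succ']
  by_cases h : a = b <;> simp [h]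

theorem hypercube_adj_cons_cons {a b : Bool} (hab : a ≠ b) (y : Fin m → Bool) :
    (hypercube (m + 1)).Adj (Fin.cons a y) (Fin.cons b y) := by
  simp [hypercube, hammingDist_cons, hab]

theorem Reachable.hypercube_avoid_cons {S : Set (Fin (m + 1) → Bool)} (b : Bool)
    {y z : Fin m → Bool} (h : ((hypercube m).avoid {g | Fin.cons b g ∈ S}).Reachable y z) :
    ((hypercube (m + 1)).avoid S).Reachable (Fin.cons b y) (Fin.cons b z) :=
  h.map (G := (hypercube m).avoid {g | Fin.cons b g ∈ S}) (G' := (hypercube (m + 1)).avoid S)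
    ⟨fun g => Fin.cons b g, fun h => ⟨by simpa [hypercube, hammingDist_cons] using h.1, h.2⟩⟩

theorem ncard_cons_add_ncard_cons_le {a b : Bool} (hab : a ≠ b) (S : Set (Fin (m + 1) → Bool)) :
    {g | Fin.cons a g ∈ S}.ncard + {g | Fin.cons b g ∈ S}.ncard ≤ S.ncard := by
  have hcard (c : Bool) :
      ((fun g => Fin.cons c g) '' {g | Fin.cons c g ∈ S}).ncard = {g | Fin.cons c g ∈ S}.ncard :=
    Set.ncard_image_of_injective _ (Fin.cons_right_injective (α := fun _ => Bool) c)
  rw [← hcard, ← hcard]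
  refine Set.ncard_add_ncard_le_of_disjoint ?_ (Set.image_subset_iff.2 fun _ h => h)
    (Set.image_subset_iff.2 fun _ h => h)
  rw [Set.disjoint_left]
  rintro _ ⟨g, -, rfl⟩ ⟨g', -, h⟩
  have := congrFun h 0
  simp only [Fin.cons_zero] at this
  exact hab this.symm

theorem hypercube_one_adj {p q : Fin 1 → Bool} (h : p ≠ q) : (hypercube 1).Adj p q :=
  le_antisymm (hammingDist_le_card_fintype.trans_eq (Fintype.card_fin 1)) (hammingDist_pos.2 h)

theorem exists_forall_cons_notMem {S : Set (Fin (m + 1) → Bool)} (hS : S.ncard < 2 ^ m) :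
    ∃ g : Fin m → Bool, ∀ c, Fin.cons c g ∉ S := by
  obtain ⟨g, hg⟩ : ∃ g, g ∉ {g | Fin.cons false g ∈ S} ∪ {g | Fin.cons true g ∈ S} := by
    refine Set.exists_notMem_of_ncard_lt ?_
    have := (Set.ncard_union_le _ _).trans (ncard_cons_add_ncard_cons_le Bool.false_ne_true S)
    simp only [Nat.card_eq_fintype_card, Fintype.card_fun, Fintype.card_bool, Fintype.card_fin]
    omega
  refine ⟨g, fun c h => hg ?_⟩
  cases c
  · exact Or.inl h
  · exact Or.inr h

theorem hypercube_avoid_reachable {S : Set (Fin m → Bool)} (hS : S.ncard < m)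
    {p q : Fin m → Bool} (hp : p ∉ S) (hq : q ∉ S) : ((hypercube m).avoid S).Reachable p q := by
  induction m with
  | zero => omega
  | succ m ih =>
    set layer : Bool → Set (Fin m → Bool) := fun b => {g | Fin.cons b g ∈ S}
    have hlayers {a b : Bool} (hab : a ≠ b) : (layer a).ncard + (layer b).ncard ≤ S.ncard :=
      ncard_cons_add_ncard_cons_le hab S
    rcases Nat.eq_zero_or_pos m with rfl | hm
    · rcases eq_or_ne p q with rfl | hpq
      · rfl
      · exact (avoid_adj.2 ⟨hypercube_one_adj hpq, hp, hq⟩).reachable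
    obtain ⟨b, hb⟩ : ∃ b, (layer b).ncard < m := by
      by_contra! h
      have := hlayers Bool.false_ne_true
      have := h false
      have := h true
      omega
    obtain ⟨g, hg⟩ := exists_forall_cons_notMem (hS.trans_le (Nat.lt_two_pow_self (n := m)))
    have toLayer (a : Bool) (y : Fin m → Bool) (hy : Fin.cons a y ∉ S) :
        ∃ z, Fin.cons b z ∉ S ∧
          ((hypercube (m + 1)).avoid S).Reachable (Fin.cons a y) (Fin.cons b z) := by
      by_cases hab : a = b
      · exact ⟨y, hab ▸ hy, hab ▸ .rfl⟩
      by_cases hrung : Fin.cons b y ∈ S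
      · have : (layer a).ncard < m := by
          have := hlayers hab
          have : 0 < (layer b).ncard := (Set.ncard_pos (Set.toFinite _)).2 ⟨y, hrung⟩
          omega
        exact ⟨g, hg b, ((ih this hy (hg a)).hypercube_avoid_cons a).trans
          (avoid_adj.2 ⟨hypercube_adj_cons_cons hab g, hg a, hg b⟩).reachable⟩
      · exact ⟨y, hrung, (avoid_adj.2 ⟨hypercube_adj_cons_cons hab y, hy, hrung⟩).reachable⟩
    rw [← Fin.cons_self_tail p] at hp ⊢
    rw [← Fin.cons_self_tail q] at hq ⊢
    obtain ⟨y, hy, hpy⟩ := toLayer _ _ hp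
    obtain ⟨z, hz, hqz⟩ := toLayer _ _ hq
    exact hpy.trans (((ih hb hy hz).hypercube_avoid_cons b).trans hqz.symm)

end SimpleGraph

section BitFlip

variable {n : ℕ}

def bitFlip (i : Fin n) (y : Fin n → Bool) : Fin n → Bool := Function.update y i (!y i)

@[simp] theorem bitFlip_apply_self (i : Fin n) (y : Fin n → Bool) : bitFlip i y i = !y i := by
  simp [bitFlip]

theorem bitFlip_apply_of_ne {i j : Fin n} (h : j ≠ i) (y : Fin n → Bool) :
    bitFlip i y j = y j := by
  simp [bitFlip, Function.update_of_ne h]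

@[simp] theorem bitFlip_bitFlip (i : Fin n) (y : Fin n → Bool) : bitFlip i (bitFlip i y) = y := by
  funext j
  rcases eq_or_ne j i with rfl | hj
  · simp
  · rw [bitFlip_apply_of_ne hj, bitFlip_apply_of_ne hj]

theorem bitFlip_ne (i : Fin n) (y : Fin n → Bool) : bitFlip i y ≠ y := fun h => by
  simpa using congrFun h i

theorem bitFlip_left_injective (y : Fin n → Bool) : Function.Injective fun i => bitFlip i y := by
  intro i j h
  by_contra hij
  have := congrFun h i
  simp [bitFlip_apply_of_ne hij] at this

theorem hammingDist_eq_one_iff {y z : Fin n → Bool} :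
    hammingDist y z = 1 ↔ ∃ i, z = bitFlip i y := by
  constructor
  · intro h
    obtain ⟨i, hi⟩ := Finset.card_eq_one.1 h
    have hdiff (j : Fin n) : y j ≠ z j ↔ j = i := by
      simpa using Finset.ext_iff.1 hi j
    refine ⟨i, funext fun j => ?_⟩
    rcases eq_or_ne j i with rfl | hj
    · have := (hdiff j).2 rfl
      cases hy : y j <;> simp_all
    · rw [bitFlip_apply_of_ne hj]
      exact (not_not.1 (mt (hdiff j).1 hj)).symm
  · rintro ⟨i, rfl⟩
    refine Finset.card_eq_one.2 ⟨i, Finset.ext fun j => ?_⟩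
    rcases eq_or_ne j i with rfl | hj
    · simp
    · simp [bitFlip_apply_of_ne hj, hj]

/-- `Q_m` has no triangles. -/
theorem bitFlip_ne_bitFlip_bitFlip (i j k : Fin n) (y : Fin n → Bool) :
    bitFlip i y ≠ bitFlip j (bitFlip k y) := by
  intro h
  rcases eq_or_ne j k with rfl | hjk
  · exact bitFlip_ne i y (h.trans (bitFlip_bitFlip j y))
  have hj := congrFun h j
  have hk := congrFun h k
  rw [bitFlip_apply_self, bitFlip_apply_of_ne hjk] at hj
  rw [bitFlip_apply_of_ne hjk.symm, bitFlip_apply_self] at hk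
  rcases eq_or_ne j i with rfl | hji
  · rw [bitFlip_apply_of_ne hjk.symm] at hk
    simp at hk
  · rw [bitFlip_apply_of_ne hji] at hj
    simp at hj

/-- Two distinct vertices of `Q_m` have at most two common neighbours. -/
theorem eq_or_eq_of_bitFlip_eq_bitFlip {y z : Fin n → Bool} {i₀ j₀ i j : Fin n} (hyz : y ≠ z)
    (h₀ : bitFlip i₀ y = bitFlip j₀ z) (h : bitFlip i y = bitFlip j z) : i = i₀ ∨ i = j₀ := by
  have hij : i ≠ j := by
    rintro rfl
    exact hyz (by simpa using congrArg (bitFlip i) h)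
  have hz : z = bitFlip j₀ (bitFlip i₀ y) := by rw [h₀, bitFlip_bitFlip]
  have hzi : z i ≠ y i := by
    have := congrFun h i
    rw [bitFlip_apply_self, bitFlip_apply_of_ne hij] at this
    rw [← this]
    cases y i <;> simp
  by_contra! hne
  rw [hz, bitFlip_apply_of_ne hne.2, bitFlip_apply_of_ne hne.1] at hzi
  exact hzi rfl

theorem ncard_range_bitFlip_union (i₀ : Fin n) (y : Fin n → Bool) :
    (Set.range (bitFlip · y) ∪ Set.range (bitFlip · (bitFlip i₀ y))).ncard = 2 * n := by
  have hdisj : Disjoint (Set.range (bitFlip · y)) (Set.range (bitFlip · (bitFlip i₀ y))) := by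
    rw [Set.disjoint_left]
    rintro _ ⟨i, rfl⟩ ⟨j, h⟩
    exact bitFlip_ne_bitFlip_bitFlip i j i₀ y h.symm
  rw [Set.ncard_union_eq hdisj, ← Set.image_univ, ← Set.image_univ,
    Set.ncard_image_of_injective _ (bitFlip_left_injective _),
    Set.ncard_image_of_injective _ (bitFlip_left_injective _), Set.ncard_univ, Nat.card_fin]
  ring

end BitFlip

namespace HCN

variable {n : ℕ}

/-- The unique crossing neighbour of a vertex of `HCN n`. -/
def cross (p : HVert n) : HVert n :=
  if p.1 = p.2 then (fun i => !p.1 i, fun i => !p.2 i) else (p.2, p.1)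

theorem cross_cross (p : HVert n) : cross (cross p) = p := by
  unfold cross
  by_cases h : p.1 = p.2
  · ext i <;> simp [h]
  · simp [h, Ne.symm h]

theorem cross_involutive : Function.Involutive (cross (n := n)) := cross_cross

theorem cross_injective : Function.Injective (cross (n := n)) := cross_involutive.injective

theorem cross_mk_of_ne {x y : Fin n → Bool} (h : x ≠ y) : cross (x, y) = (y, x) := by
  simp [cross, h]

theorem cross_fst_ne (hn : 0 < n) (p : HVert n) : (cross p).1 ≠ p.1 := by
  unfold cross
  split_ifs with h
  · intro hc
    simpa using congrFun hc ⟨0, hn⟩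
  · exact Ne.symm h

theorem adj_iff (hn : 0 < n) {u v : HVert n} :
    (HCN n).Adj u v ↔ (u.1 = v.1 ∧ hammingDist u.2 v.2 = 1) ∨ v = cross u := by
  have hcross (u v : HVert n) : ((u.1 ≠ u.2 ∧ v = (u.2, u.1)) ∨
      (u.1 = u.2 ∧ v = (fun i => !u.1 i, fun i => !u.2 i))) ↔ v = cross u := by
    unfold cross
    by_cases h : u.1 = u.2 <;> simp [h]
  have hswap : u = cross v ↔ v = cross u := by
    constructor <;> rintro rfl <;> rw [cross_cross]
  rw [HCN, SimpleGraph.fromRel_adj, hcross, hcross, hswap]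
  change u ≠ v ∧ (((u.1 = v.1 ∧ hammingDist u.2 v.2 = 1) ∨ _) ∨
    ((v.1 = u.1 ∧ hammingDist v.2 u.2 = 1) ∨ _)) ↔ _
  rw [hammingDist_comm v.2, eq_comm (a := v.1)]
  constructor
  · rintro ⟨-, h | h⟩ <;> tauto
  · intro h
    refine ⟨?_, Or.inl h⟩
    rintro rfl
    rcases h with ⟨-, h⟩ | h
    · simp at h
    · exact cross_fst_ne hn u (by rw [← h])

theorem adj_cross (hn : 0 < n) (p : HVert n) : (HCN n).Adj p (cross p) :=
  (adj_iff hn).2 (Or.inr rfl)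

theorem adj_swap (hn : 0 < n) {x y : Fin n → Bool} (h : x ≠ y) : (HCN n).Adj (x, y) (y, x) := by
  simpa [cross_mk_of_ne h] using adj_cross hn (x, y)

theorem adj_mk_mk (hn : 0 < n) {x y z : Fin n → Bool} (h : hammingDist y z = 1) :
    (HCN n).Adj (x, y) (x, z) :=
  (adj_iff hn).2 (Or.inl ⟨rfl, h⟩)

theorem adj_iff_bitFlip (hn : 0 < n) {u v : HVert n} :
    (HCN n).Adj u v ↔ (∃ i, v = (u.1, bitFlip i u.2)) ∨ v = cross u := by
  rw [adj_iff hn, hammingDist_eq_one_iff]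
  constructor
  · rintro (⟨h1, i, h2⟩ | h)
    · exact Or.inl ⟨i, Prod.ext h1.symm h2⟩
    · exact Or.inr h
  · rintro (⟨i, rfl⟩ | h)
    · exact Or.inl ⟨rfl, i, rfl⟩
    · exact Or.inr h

theorem adj_bitFlip (hn : 0 < n) (p : HVert n) (i : Fin n) :
    (HCN n).Adj p (p.1, bitFlip i p.2) :=
  (adj_iff_bitFlip hn).2 (Or.inl ⟨i, rfl⟩)

theorem neighborSet_eq (hn : 0 < n) (p : HVert n) :
    (HCN n).neighborSet p = Set.range (fun i => (p.1, bitFlip i p.2)) ∪ {cross p} := by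
  ext v
  simp only [SimpleGraph.mem_neighborSet, adj_iff_bitFlip hn, Set.mem_union, Set.mem_range,
    Set.mem_singleton_iff, eq_comm (b := v)]

theorem ncard_neighborSet (hn : 0 < n) (p : HVert n) :
    ((HCN n).neighborSet p).ncard = n + 1 := by
  have hinj : Function.Injective fun i => ((p.1, bitFlip i p.2) : HVert n) :=
    fun i j h => bitFlip_left_injective p.2 (congrArg Prod.snd h)
  have hdisj : Disjoint (Set.range fun i => ((p.1, bitFlip i p.2) : HVert n)) {cross p} := by
    rw [Set.disjoint_singleton_right]
    rintro ⟨i, hi⟩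
    exact cross_fst_ne hn p (by rw [← hi])
  rw [neighborSet_eq hn, Set.ncard_union_eq hdisj, ← Set.image_univ,
    Set.ncard_image_of_injective _ hinj, Set.ncard_univ, Nat.card_fin, Set.ncard_singleton]

theorem not_adj_of_adj_of_adj (hn : 0 < n) {p q r : HVert n} (hpq : (HCN n).Adj p q)
    (hqr : (HCN n).Adj q r) : ¬ (HCN n).Adj p r := by
  intro hpr
  rcases (adj_iff_bitFlip hn).1 hpq with ⟨i, rfl⟩ | rfl <;>
  rcases (adj_iff_bitFlip hn).1 hqr with ⟨j, rfl⟩ | rfl <;>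
  rcases (adj_iff_bitFlip hn).1 hpr with ⟨k, h⟩ | h
  · exact bitFlip_ne_bitFlip_bitFlip k j i p.2 (congrArg Prod.snd h).symm
  · exact cross_fst_ne hn p (by simpa using (congrArg Prod.fst h).symm)
  · exact cross_fst_ne hn (p.1, bitFlip i p.2) (by simpa using congrArg Prod.fst h)
  · exact hpq.ne (cross_injective h).symm
  · exact cross_fst_ne hn p (by simpa using congrArg Prod.fst h)
  · exact hqr.ne h.symm
  · exact hpr.ne (cross_cross p).symm
  · exact hpr.ne (cross_cross p).symm

theorem cliqueFree_three (hn : 0 < n) : (HCN n).CliqueFree 3 := by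
  classical
  intro s hs
  obtain ⟨p, q, r, hpq, hpr, hqr, rfl⟩ := SimpleGraph.is3Clique_iff.1 hs
  exact not_adj_of_adj_of_adj hn hpq hqr hpr

theorem ncard_neighborSet_inter_le_two (hn : 0 < n) {p q : HVert n} (hpq : p ≠ q) :
    ((HCN n).neighborSet p ∩ (HCN n).neighborSet q).ncard ≤ 2 := by
  suffices ∃ a b, (HCN n).neighborSet p ∩ (HCN n).neighborSet q ⊆ {a, b} by
    obtain ⟨a, b, h⟩ := this
    exact (Set.ncard_le_ncard h).trans ((Set.ncard_insert_le a {b}).trans (by simp))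
  by_cases hfst : p.1 = q.1
  · have hsnd : p.2 ≠ q.2 := fun h => hpq (Prod.ext hfst h)
    have hcommon {t} (ht : t ∈ (HCN n).neighborSet p ∩ (HCN n).neighborSet q) :
        ∃ i j, t = (p.1, bitFlip i p.2) ∧ bitFlip i p.2 = bitFlip j q.2 := by
      obtain ⟨htp, htq⟩ := ht
      rcases (adj_iff_bitFlip hn).1 htp with ⟨i, rfl⟩ | rfl <;>
      rcases (adj_iff_bitFlip hn).1 htq with ⟨j, h⟩ | h
      · exact ⟨i, j, rfl, congrArg Prod.snd h⟩
      · exact absurd (congrArg Prod.fst h) (by simpa [hfst] using (cross_fst_ne hn q).symm)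
      · exact absurd (congrArg Prod.fst h) (by simpa [hfst] using cross_fst_ne hn p)
      · exact absurd (cross_injective h) hpq
    rcases Set.eq_empty_or_nonempty ((HCN n).neighborSet p ∩ (HCN n).neighborSet q) with
      h | ⟨t₀, ht₀⟩
    · exact ⟨p, p, by simp [h]⟩
    obtain ⟨i₀, j₀, -, h₀⟩ := hcommon ht₀
    refine ⟨(p.1, bitFlip i₀ p.2), (p.1, bitFlip j₀ p.2), fun t ht => ?_⟩
    obtain ⟨i, j, rfl, h⟩ := hcommon ht
    rcases eq_or_eq_of_bitFlip_eq_bitFlip hsnd h₀ h with rfl | rfl <;> simp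
  · refine ⟨cross p, cross q, fun t ⟨htp, htq⟩ => ?_⟩
    rcases (adj_iff_bitFlip hn).1 htp with ⟨i, rfl⟩ | rfl
    · rcases (adj_iff_bitFlip hn).1 htq with ⟨j, h⟩ | h
      · exact absurd (congrArg Prod.fst h) hfst
      · exact Or.inr h
    · exact Or.inl rfl

end HCN

theorem two_mul_add_one_lt_two_pow {n : ℕ} (hn : 3 ≤ n) : 2 * n + 1 < 2 ^ n := by
  induction n, hn using Nat.le_induction with
  | base => norm_num
  | succ n _ ih => rw [pow_succ]; omega

theorem GoodNbrSet.exists_adj_notMem {n : ℕ} {F : Set (HVert n)} (hF : GoodNbrSet n 1 F)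
    {v : HVert n} (hv : v ∉ F) : ∃ t, (HCN n).Adj v t ∧ t ∉ F := by
  obtain ⟨t, ht, htF⟩ := Set.nonempty_of_ncard_ne_zero (Nat.one_le_iff_ne_zero.1 (hF v hv))
  exact ⟨t, ht, htF⟩

theorem GoodNbrSet.inter {n : ℕ} {F₁ F₂ : Set (HVert n)} (h₁ : GoodNbrSet n 1 F₁)
    (h₂ : GoodNbrSet n 1 F₂) : GoodNbrSet n 1 (F₁ ∩ F₂) := by
  intro v hv
  obtain ⟨t, hvt, ht⟩ : ∃ t, (HCN n).Adj v t ∧ t ∉ F₁ ∩ F₂ := by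
    by_cases hv₁ : v ∈ F₁
    · obtain ⟨t, hvt, ht⟩ := h₂.exists_adj_notMem fun hv₂ => hv ⟨hv₁, hv₂⟩
      exact ⟨t, hvt, fun h => ht h.2⟩
    · obtain ⟨t, hvt, ht⟩ := h₁.exists_adj_notMem hv₁
      exact ⟨t, hvt, fun h => ht h.1⟩
  exact Nat.one_le_iff_ne_zero.2 (Set.ncard_ne_zero_of_mem (a := t) ⟨hvt, ht⟩)

namespace HCN

open SimpleGraph

variable {n : ℕ} {A : Set (HVert n)}

def cluster (x : Fin n → Bool) : Set (HVert n) := {p | p.1 = x}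

theorem eq_of_le_ncard_inter_cluster (hA : A.ncard < 2 * n) {x z : Fin n → Bool}
    (hx : n ≤ (A ∩ cluster x).ncard) (hz : n ≤ (A ∩ cluster z).ncard) : x = z := by
  by_contra hxz
  have hdisj : Disjoint (A ∩ cluster x) (A ∩ cluster z) := by
    rw [Set.disjoint_left]
    rintro p ⟨-, rfl⟩ ⟨-, h⟩
    exact hxz h
  have := Set.ncard_add_ncard_le_of_disjoint hdisj Set.inter_subset_left Set.inter_subset_left
  omega

theorem avoid_reachable_in_cluster (hn : 0 < n) {x : Fin n → Bool}
    (hx : (A ∩ cluster x).ncard < n) {y y' : Fin n → Bool} (hy : (x, y) ∉ A)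
    (hy' : (x, y') ∉ A) : ((HCN n).avoid A).Reachable (x, y) (x, y') := by
  have hS : {g | (x, g) ∈ A}.ncard < n := by
    rw [← Set.ncard_image_of_injective _ (Prod.mk_right_injective x)]
    refine lt_of_le_of_lt (Set.ncard_le_ncard ?_) hx
    rintro _ ⟨g, hg, rfl⟩
    exact ⟨hg, rfl⟩
  exact (hypercube_avoid_reachable hS hy hy').map (G := (hypercube n).avoid {g | (x, g) ∈ A})
    (G' := (HCN n).avoid A)
    ⟨fun g => (x, g), fun h => ⟨adj_mk_mk hn h.1, h.2⟩⟩

theorem avoid_reachable_across_clusters (hn : 3 ≤ n) (hA : A.ncard < 2 * n)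
    {x z y y' : Fin n → Bool} (hx : (A ∩ cluster x).ncard < n) (hz : (A ∩ cluster z).ncard < n)
    (hy : (x, y) ∉ A) (hy' : (z, y') ∉ A) : ((HCN n).avoid A).Reachable (x, y) (z, y') := by
  have hn0 : 0 < n := by omega
  -- a cluster `t ∉ {x, z}` outside `f '' A` is fault-free and its links to `x` and `z` are intact
  let f : HVert n → Fin n → Bool := fun p => if p.1 = x ∨ p.1 = z then p.2 else p.1
  obtain ⟨t, ht⟩ : ∃ t, t ∉ {x, z} ∪ f '' A := by
    refine Set.exists_notMem_of_ncard_lt ?_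
    have := Set.ncard_union_le {x, z} (f '' A)
    have := Set.ncard_insert_le x {z}
    have := Set.ncard_image_le (f := f) A.toFinite
    have := two_mul_add_one_lt_two_pow hn
    simp only [Set.ncard_singleton, Nat.card_eq_fintype_card, Fintype.card_fun,
      Fintype.card_bool, Fintype.card_fin] at *
    omega
  simp only [Set.mem_union, Set.mem_insert_iff, Set.mem_singleton_iff, Set.mem_image, not_or,
    not_exists, not_and] at ht
  obtain ⟨⟨htx, htz⟩, hf⟩ := ht
  have hxt : (x, t) ∉ A := fun h => hf _ h (by simp [f])
  have hzt : (z, t) ∉ A := fun h => hf _ h (by simp [f])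
  have htb (b : Fin n → Bool) : (t, b) ∉ A := fun h => hf _ h (by simp [f, htx, htz])
  have ht : (A ∩ cluster t).ncard < n := by
    have : A ∩ cluster t = ∅ := Set.eq_empty_of_forall_notMem fun p ⟨hp, hpt⟩ =>
      htb p.2 (by rwa [← hpt])
    rw [this, Set.ncard_empty]
    exact hn0
  exact (avoid_reachable_in_cluster hn0 hx hy hxt).trans <|
    (avoid_adj.2 ⟨adj_swap hn0 (Ne.symm htx), hxt, htb x⟩).reachable.trans <|
    (avoid_reachable_in_cluster hn0 ht (htb x) (htb z)).trans <|
    (avoid_adj.2 ⟨adj_swap hn0 htz, htb z, hzt⟩).reachable.trans <|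
    avoid_reachable_in_cluster hn0 hz hzt hy'

theorem ncard_le_of_forall_mem_or_cross_mem (hn : 0 < n) {x : Fin n → Bool} {N : Set (HVert n)}
    (hNx : N ⊆ cluster x) (hNA : ∀ y ∈ N, y ∈ A ∨ cross y ∈ A) : N.ncard ≤ A.ncard := by
  classical
  refine Set.ncard_le_ncard_of_injOn (fun y => if y ∈ A then y else cross y) ?_ ?_
  · intro y hy
    split_ifs with h
    · exact h
    · exact (hNA y hy).resolve_left h
  · intro y hy y' hy' h
    have hcl (y y') (hy : y ∈ N) (hy' : y' ∈ N) : y ≠ cross y' := fun h =>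
      cross_fst_ne hn y' (by rw [← h, hNx hy, hNx hy'])
    dsimp only at h
    split_ifs at h
    · exact h
    · exact absurd h (hcl y y' hy hy')
    · exact absurd h.symm (hcl y' y hy' hy)
    · exact cross_injective h

theorem exists_avoid_reachable_ncard_inter_cluster_lt (hn : 3 ≤ n) (hA : A.ncard < 2 * n)
    (hgood : GoodNbrSet n 1 A) {k : HVert n} (hk : k ∉ A) :
    ∃ m, m ∉ A ∧ (A ∩ cluster m.1).ncard < n ∧ ((HCN n).avoid A).Reachable k m := by
  have hn0 : 0 < n := by omega
  by_contra! hcon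
  have hk_broken : n ≤ (A ∩ cluster k.1).ncard := not_lt.1 fun h => hcon k hk h .rfl
  have hstay {y} (hy : y ∉ A) (hky : ((HCN n).avoid A).Reachable k y) : y.1 = k.1 :=
    eq_of_le_ncard_inter_cluster hA (not_lt.1 fun h => hcon y hy h hky) hk_broken
  have hcross {y} (hy : y ∉ A) (hky : ((HCN n).avoid A).Reachable k y) : cross y ∈ A := by
    by_contra h
    have := hstay h (hky.trans (avoid_adj.2 ⟨adj_cross hn0 y, hy, h⟩).reachable)
    exact cross_fst_ne hn0 y (this.trans (hstay hy hky).symm)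
  obtain ⟨k', hkk', hk'A⟩ := hgood.exists_adj_notMem hk
  have hk'reach : ((HCN n).avoid A).Reachable k k' := (avoid_adj.2 ⟨hkk', hk, hk'A⟩).reachable
  obtain ⟨i₀, rfl⟩ : ∃ i₀, k' = (k.1, bitFlip i₀ k.2) := by
    rcases (adj_iff_bitFlip hn0).1 hkk' with h | rfl
    · exact h
    · exact absurd (hstay hk'A hk'reach) (cross_fst_ne hn0 k)
  -- the `2n` in-cluster neighbours of the edge `k k'`: each lies in `A` or has its crossing
  -- neighbour in `A`, and these are `2n` distinct vertices of `A`
  let N : Set (HVert n) :=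
    Prod.mk k.1 '' (Set.range (bitFlip · k.2) ∪ Set.range (bitFlip · (bitFlip i₀ k.2)))
  have hNA (y) (hy : y ∈ N) : y ∈ A ∨ cross y ∈ A := by
    obtain ⟨g, hg, rfl⟩ := hy
    refine or_iff_not_imp_left.2 fun hyA => hcross hyA ?_
    rcases hg with ⟨i, rfl⟩ | ⟨i, rfl⟩
    · exact (avoid_adj.2 ⟨adj_bitFlip hn0 k i, hk, hyA⟩).reachable
    · exact hk'reach.trans (avoid_adj.2 ⟨adj_bitFlip hn0 _ i, hk'A, hyA⟩).reachable
  have hN := ncard_le_of_forall_mem_or_cross_mem hn0 (x := k.1)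
    (by rintro _ ⟨g, -, rfl⟩; rfl) hNA
  rw [Set.ncard_image_of_injective _ (Prod.mk_right_injective _), ncard_range_bitFlip_union] at hN
  omega

/-- `κ¹(HCN_n) ≥ 2n`. -/
theorem avoid_reachable_of_goodNbrSet (hn : 3 ≤ n) (hA : A.ncard < 2 * n)
    (hgood : GoodNbrSet n 1 A) {p q : HVert n} (hp : p ∉ A) (hq : q ∉ A) :
    ((HCN n).avoid A).Reachable p q := by
  obtain ⟨p', hp'A, hp', hpp'⟩ := exists_avoid_reachable_ncard_inter_cluster_lt hn hA hgood hp
  obtain ⟨q', hq'A, hq', hqq'⟩ := exists_avoid_reachable_ncard_inter_cluster_lt hn hA hgood hq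
  exact hpp'.trans ((avoid_reachable_across_clusters hn hA hp' hq' hp'A hq'A).trans hqq'.symm)

end HCN


namespace HCN

open SimpleGraph

variable {n : ℕ} {F₁ F₂ : Set (HVert n)}

def isolatedSet (F : Set (HVert n)) : Set (HVert n) :=
  {z | z ∉ F ∧ ∀ t, (HCN n).Adj z t → t ∈ F}

theorem exists_mem_sdiff_adj_of_forall_adj_mem (h₁ : GoodNbrSet n 1 F₁) {y : HVert n}
    (hy : y ∉ F₁) (hyF : ∀ t, (HCN n).Adj y t → t ∈ F₁ ∪ F₂) : ∃ v ∈ F₂ \ F₁, (HCN n).Adj y v := by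
  obtain ⟨v, hyv, hv⟩ := h₁.exists_adj_notMem hy
  exact ⟨v, ⟨(hyF v hyv).resolve_left hv, hv⟩, hyv⟩

theorem adj_of_mem_isolatedSet (h₁ : GoodNbrSet n 1 F₁) {v : HVert n} (hv : F₂ \ F₁ = {v})
    {y : HVert n} (hy : y ∈ isolatedSet (F₁ ∪ F₂)) : (HCN n).Adj v y := by
  obtain ⟨v', hv', hyv'⟩ :=
    exists_mem_sdiff_adj_of_forall_adj_mem h₁ (fun h => hy.1 (Or.inl h)) hy.2
  rw [hv, Set.mem_singleton_iff] at hv'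
  exact hv' ▸ hyv'.symm

section Conditions

variable (hcond : ∀ u ∉ F₁ ∪ F₂, ∀ w ∉ F₁ ∪ F₂, (HCN n).Adj u w →
      ∀ v ∈ symmDiff F₁ F₂, ¬ (HCN n).Adj v w)
include hcond

theorem mem_isolatedSet_of_adj {z s : HVert n} (hz : z ∉ F₁ ∪ F₂) (hs : s ∈ symmDiff F₁ F₂)
    (hsz : (HCN n).Adj s z) : z ∈ isolatedSet (F₁ ∪ F₂) :=
  ⟨hz, fun t hzt => by_contra fun ht => hcond t ht z hz hzt.symm s hs hsz⟩

theorem mem_isolatedSet_or_mem_symmDiff_of_reachable {w z : HVert n}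
    (hw : w ∈ isolatedSet (F₁ ∪ F₂)) (hwz : ((HCN n).avoid (F₁ ∩ F₂)).Reachable w z) :
    z ∈ isolatedSet (F₁ ∪ F₂) ∪ symmDiff F₁ F₂ := by
  refine hwz.mem_of_forall_adj_mem (fun a b hab ha => ?_) (Or.inl hw)
  by_cases hb : b ∈ F₁ ∪ F₂
  · right
    rw [Set.mem_symmDiff]
    have := hab.2.2
    simp only [Set.mem_union, Set.mem_inter_iff, not_and] at hb this
    tauto
  · left
    rcases ha with ha | ha
    · exact absurd (ha.2 b hab.1) hb
    · exact mem_isolatedSet_of_adj hcond hb ha hab.1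

theorem two_mul_le_ncard_inter (hn : 3 ≤ n) (h₁ : GoodNbrSet n 1 F₁) (h₂ : GoodNbrSet n 1 F₂)
    (hc₁ : F₁.ncard ≤ 2 * n + 1) (hc₂ : F₂.ncard ≤ 2 * n + 1) {w : HVert n}
    (hw : w ∈ isolatedSet (F₁ ∪ F₂)) : 2 * n ≤ (F₁ ∩ F₂).ncard := by
  have hn0 : 0 < n := by omega
  obtain ⟨h, hh, hch⟩ := cross_involutive.exists_notMem_and_notMem (s := F₁ ∪ F₂) (by
    have := Set.ncard_union_le F₁ F₂
    have := two_mul_add_one_lt_two_pow hn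
    simp only [Nat.card_eq_fintype_card, Fintype.card_prod, Fintype.card_fun, Fintype.card_bool,
      Fintype.card_fin]
    nlinarith)
  by_contra! hA
  have hwh := avoid_reachable_of_goodNbrSet hn hA (h₁.inter h₂) (fun h => hw.1 (Or.inl h.1))
    (fun h' => hh (Or.inl h'.1))
  rcases mem_isolatedSet_or_mem_symmDiff_of_reachable hcond hw hwh with hW | hD
  · exact hch (hW.2 _ (adj_cross hn0 h))
  · exact hh (Set.symmDiff_subset_union hD)

theorem neighborSet_subset_of_mem_symmDiff {s s' : HVert n}
    (hs : s ∈ symmDiff F₁ F₂) (hsub : F₁ ∪ F₂ ⊆ F₁ ∩ F₂ ∪ {s, s'}) (hss' : ¬ (HCN n).Adj s s') :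
    (HCN n).neighborSet s ⊆ F₁ ∩ F₂ ∪ isolatedSet (F₁ ∪ F₂) := by
  intro t hst
  by_cases ht : t ∈ F₁ ∪ F₂
  · rcases hsub ht with ht | rfl | rfl
    · exact Or.inl ht
    · exact absurd hst (HCN n).irrefl
    · exact absurd hst hss'
  · exact Or.inr (mem_isolatedSet_of_adj hcond ht hs hst)

theorem three_mul_le_ncard_inter_add_five (hn : 2 ≤ n) (h₁ : GoodNbrSet n 1 F₁)
    (h₂ : GoodNbrSet n 1 F₂) {u v w : HVert n} (hu : F₁ \ F₂ = {u}) (hv : F₂ \ F₁ = {v})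
    (hw : w ∈ isolatedSet (F₁ ∪ F₂)) : 3 * (n + 1) ≤ (F₁ ∩ F₂).ncard + 5 := by
  have hn0 : 0 < n := by omega
  have hu' : u ∈ F₁ \ F₂ := hu ▸ rfl
  have hv' : v ∈ F₂ \ F₁ := hv ▸ rfl
  have hadj_u {y} (hy : y ∈ isolatedSet (F₁ ∪ F₂)) : (HCN n).Adj u y :=
    adj_of_mem_isolatedSet h₂ hu (Set.union_comm F₁ F₂ ▸ hy)
  have hadj_v {y} (hy : y ∈ isolatedSet (F₁ ∪ F₂)) : (HCN n).Adj v y :=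
    adj_of_mem_isolatedSet h₁ hv hy
  have huv : ¬ (HCN n).Adj u v := not_adj_of_adj_of_adj hn0 (hadj_u hw) (hadj_v hw).symm
  have hsub : F₁ ∪ F₂ ⊆ F₁ ∩ F₂ ∪ {u, v} := by
    intro t ht
    by_cases h₁t : t ∈ F₁ <;> by_cases h₂t : t ∈ F₂
    · exact Or.inl ⟨h₁t, h₂t⟩
    · exact Or.inr (Or.inl (hu.subset ⟨h₁t, h₂t⟩))
    · exact Or.inr (Or.inr (hv.subset ⟨h₂t, h₁t⟩))
    · exact absurd ht (by simp [h₁t, h₂t])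
  exact SimpleGraph.three_mul_le_ncard_add_five (G := HCN n) (A := F₁ ∩ F₂) (u := u) (v := v)
    (by omega) (ncard_neighborSet hn0) (cliqueFree_three hn0) (ncard_neighborSet_inter_le_two hn0)
    (fun h => hv'.2 (h ▸ hu'.1)) (fun h => hu'.2 h.2) (fun h => hv'.2 h.1) hw
    (Set.disjoint_left.2 fun y hy hyA => hy.1 (Or.inl hyA.1))
    (fun y hy => ⟨hadj_u hy, hadj_v hy⟩) (fun y hy t ht => hsub (hy.2 t ht))
    (neighborSet_subset_of_mem_symmDiff hcond (Or.inl hu') hsub huv)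
    (neighborSet_subset_of_mem_symmDiff hcond (Or.inr hv') (Set.pair_comm u v ▸ hsub)
      (fun h => huv h.symm))

end Conditions

end HCN

theorem stmt_18_general (n : ℕ) (hn : 3 ≤ n)
    (F1 F2 : Set (HVert n))
    (h1 : GoodNbrSet n 1 F1) (h2 : GoodNbrSet n 1 F2)
    (hc1 : F1.ncard ≤ 2 * n + 1) (hc2 : F2.ncard ≤ 2 * n + 1)
    (hcond1 : ∀ u ∉ F1 ∪ F2, ∀ w ∉ F1 ∪ F2, (HCN n).Adj u w →
      ∀ v ∈ symmDiff F1 F2, ¬ (HCN n).Adj v w) :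
    ∀ w ∉ F1 ∪ F2, ∃ z ∉ F1 ∪ F2, (HCN n).Adj w z := by
  intro w hw
  by_contra! hiso
  have hwW : w ∈ HCN.isolatedSet (F1 ∪ F2) := ⟨hw, fun t ht => by_contra fun h => hiso t h ht⟩
  have hA := HCN.two_mul_le_ncard_inter hcond1 hn h1 h2 hc1 hc2 hwW
  obtain ⟨u, hu, -⟩ := HCN.exists_mem_sdiff_adj_of_forall_adj_mem h2 (fun h => hw (Or.inr h))
    (Set.union_comm F1 F2 ▸ hwW.2)
  obtain ⟨v, hv, -⟩ := HCN.exists_mem_sdiff_adj_of_forall_adj_mem h1 (fun h => hw (Or.inl h)) hwW.2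
  have hF1 := Set.ncard_inter_add_ncard_sdiff_eq_ncard F1 F2
  have hF2 := Set.ncard_inter_add_ncard_sdiff_eq_ncard F2 F1
  rw [Set.inter_comm] at hF2
  have hu' : F1 \ F2 = {u} := Set.sdiff_eq_singleton_of_ncard_le hu (by omega)
  have hv' : F2 \ F1 = {v} := Set.sdiff_eq_singleton_of_ncard_le hv (by rw [Set.inter_comm]; omega)
  have := HCN.three_mul_le_ncard_inter_add_five hcond1 (by omega) h1 h2 hu' hv' hwW
  rw [hu', Set.ncard_singleton] at hF1
  omega

/-- For n ≥ 3: if F₁ ≠ F₂ are 1-good-neighbor faulty sets of HCN_n of size at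
most 2n+1 which violate all three MM* distinguishability conditions, then the
subgraph induced on V \ (F₁ ∪ F₂) has no isolated vertex. -/
theorem stmt_18 (n : ℕ) (hn : 3 ≤ n)
    (F1 F2 : Set (HVert n)) (hne : F1 ≠ F2)
    (h1 : GoodNbrSet n 1 F1) (h2 : GoodNbrSet n 1 F2)
    (hc1 : F1.ncard ≤ 2 * n + 1) (hc2 : F2.ncard ≤ 2 * n + 1)
    (hcond1 : ∀ u ∉ F1 ∪ F2, ∀ w ∉ F1 ∪ F2, (HCN n).Adj u w →
      ∀ v ∈ symmDiff F1 F2, ¬ (HCN n).Adj v w)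
    (hcond2 : ∀ w ∉ F1 ∪ F2, ¬ ∃ u ∈ F1 \ F2, ∃ v ∈ F1 \ F2,
      u ≠ v ∧ (HCN n).Adj u w ∧ (HCN n).Adj v w)
    (hcond3 : ∀ w ∉ F1 ∪ F2, ¬ ∃ u ∈ F2 \ F1, ∃ v ∈ F2 \ F1,
      u ≠ v ∧ (HCN n).Adj u w ∧ (HCN n).Adj v w) :
    ∀ w ∉ F1 ∪ F2, ∃ z ∉ F1 ∪ F2, (HCN n).Adj w z :=
  stmt_18_general n hn F1 F2 h1 h2 hc1 hc2 hcond1
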